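/- For each even n ≥ 0, the polynomials y_{±n}, r²y_{±(n−2)}, …, r^{n−2}y_{±2}, r^n y_0 form a basis of the complex vector space of degree-n homogeneous polynomials in two variables (with r² = x²+y²); in particular these n+1 polynomials are linearly independent and span the (n+1)-dimensional space of homogeneous polynomials of degree n. -/
import Mathlib

open MvPolynomial

noncomputable def zsign (m : ℤ) : ℂ := if 0 ≤ m then 1 else -1

/-- The harmonic polynomial `y_m = (X₀ + sign(m) i X₁)^{|m|}` as a polynomial. -/
noncomputable def yP (m : ℤ) : MvPolynomial (Fin 2) ℂ :=
  (X 0 + C (zsign m * Complex.I) * X 1) ^ m.natAbs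

/-- The family member `r^{n−|m|} y_m = (X₀² + X₁²)^{(n−|m|)/2} y_m`. -/
noncomputable def fam (n : ℕ) (m : ℤ) : MvPolynomial (Fin 2) ℂ :=
  (X 0 ^ 2 + X 1 ^ 2) ^ ((n - m.natAbs) / 2) * yP m

noncomputable def uu : MvPolynomial (Fin 2) ℂ := X 0 + C Complex.I * X 1
noncomputable def vv : MvPolynomial (Fin 2) ℂ := X 0 - C Complex.I * X 1

noncomputable def sig : MvPolynomial (Fin 2) ℂ →ₐ[ℂ] MvPolynomial (Fin 2) ℂ :=
  aeval ![uu, vv]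

noncomputable def tau : MvPolynomial (Fin 2) ℂ →ₐ[ℂ] MvPolynomial (Fin 2) ℂ :=
  aeval ![C (1/2 : ℂ) * (X 0 + X 1), C (-(Complex.I)/2) * (X 0 - X 1)]

lemma C_half_two : (C (2⁻¹:ℂ) : MvPolynomial (Fin 2) ℂ) * 2 = 1 := by
  rw [show (2 : MvPolynomial (Fin 2) ℂ) = C 2 from (map_ofNat C 2).symm, ← C_mul]
  norm_num

lemma C_Ihalf : (C (-Complex.I/2) : MvPolynomial (Fin 2) ℂ) * (C Complex.I * 2) = 1 := by
  rw [show (2 : MvPolynomial (Fin 2) ℂ) = C 2 from (map_ofNat C 2).symm, ← C_mul, ← C_mul, ← C_1]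
  congr 1
  have h := Complex.I_mul_I
  linear_combination -h

lemma CICIhalf : (C Complex.I : MvPolynomial (Fin 2) ℂ) * C (-Complex.I/2) = C 2⁻¹ := by
  rw [← C_mul]
  congr 1
  linear_combination (-1/2 : ℂ) * Complex.I_mul_I

lemma sig_tau : sig.comp tau = AlgHom.id ℂ _ := by
  apply MvPolynomial.algHom_ext
  intro i
  fin_cases i
  · simp [sig, tau, uu, vv, algebraMap_eq]
    linear_combination (X 0 : MvPolynomial (Fin 2) ℂ) * C_half_two
  · simp [sig, tau, uu, vv, algebraMap_eq]
    linear_combination (X 1 : MvPolynomial (Fin 2) ℂ) * C_Ihalf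

lemma tau_sig : tau.comp sig = AlgHom.id ℂ _ := by
  apply MvPolynomial.algHom_ext
  intro i
  fin_cases i
  · simp [sig, tau, uu, vv, algebraMap_eq]
    linear_combination (X 0 - X 1 : MvPolynomial (Fin 2) ℂ) * CICIhalf + (X 0 : MvPolynomial (Fin 2) ℂ) * C_half_two
  · simp [sig, tau, uu, vv, algebraMap_eq]
    linear_combination (-(X 0 - X 1) : MvPolynomial (Fin 2) ℂ) * CICIhalf + (X 1 : MvPolynomial (Fin 2) ℂ) * C_half_two

noncomputable def sigEquiv : MvPolynomial (Fin 2) ℂ ≃ₐ[ℂ] MvPolynomial (Fin 2) ℂ :=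
  AlgEquiv.ofAlgHom sig tau sig_tau tau_sig

lemma sig_inj : Function.Injective sig := sigEquiv.injective

lemma uu_mul_vv : uu * vv = X 0 ^ 2 + X 1 ^ 2 := by
  have h : (C Complex.I : MvPolynomial (Fin 2) ℂ) ^ 2 = -1 := by
    rw [← C_pow, Complex.I_sq, map_neg, map_one]
  simp only [uu, vv]
  linear_combination (-(X 1 : MvPolynomial (Fin 2) ℂ) ^ 2) * h

def AA (n : ℕ) (m : ℤ) : ℕ := (n - m.natAbs) / 2 + (if 0 ≤ m then m.natAbs else 0)
def BB (n : ℕ) (m : ℤ) : ℕ := (n - m.natAbs) / 2 + (if 0 ≤ m then 0 else m.natAbs)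

lemma fam_eq (n : ℕ) (m : ℤ) : fam n m = uu ^ AA n m * vv ^ BB n m := by
  rcases le_or_gt 0 m with h | h
  · simp only [fam, yP, AA, BB, if_pos h, zsign, one_mul, add_zero, ← uu_mul_vv]
    rw [show (X 0 + C Complex.I * X 1 : MvPolynomial (Fin 2) ℂ) = uu from rfl]
    ring
  · simp only [fam, yP, AA, BB, if_neg (not_le.mpr h), zsign, zero_add, ← uu_mul_vv]
    rw [show (X 0 + C (-1 * Complex.I) * X 1 : MvPolynomial (Fin 2) ℂ) = vv by
      simp [vv]; ring]
    ring

noncomputable def ee (n : ℕ) (m : ℤ) : Fin 2 →₀ ℕ :=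
  Finsupp.single 0 (AA n m) + Finsupp.single 1 (BB n m)

lemma ee_apply0 (n : ℕ) (m : ℤ) : ee n m 0 = AA n m := by
  simp [ee, Finsupp.single_apply]

lemma ee_apply1 (n : ℕ) (m : ℤ) : ee n m 1 = BB n m := by
  simp [ee, Finsupp.single_apply]

lemma monomial_ee (n : ℕ) (m : ℤ) :
    (monomial (ee n m) (1:ℂ) : MvPolynomial (Fin 2) ℂ) = X 0 ^ AA n m * X 1 ^ BB n m := by
  rw [X_pow_eq_monomial, X_pow_eq_monomial, monomial_mul, one_mul]
  rfl

lemma sig_monomial (n : ℕ) (m : ℤ) : sig (monomial (ee n m) (1:ℂ)) = fam n m := by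
  rw [monomial_ee, map_mul, map_pow, map_pow, fam_eq]
  simp [sig]

lemma AB_sub (n : ℕ) (m : ℤ) : (AA n m : ℤ) - (BB n m : ℤ) = m := by
  simp only [AA, BB]
  split_ifs with h <;> omega

lemma AB_add (n : ℕ) (m : ℤ) (hm1 : m.natAbs ≤ n) (hm2 : Even (n - m.natAbs)) :
    AA n m + BB n m = n := by
  rw [Nat.even_iff] at hm2
  simp only [AA, BB]
  split_ifs with h <;> omega

lemma ee_inj (n : ℕ) : Function.Injective fun m : ℤ => ee n m := by
  intro a b hab
  simp only at hab
  have h0 : ee n a 0 = ee n b 0 := by rw [hab]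
  have h1 : ee n a 1 = ee n b 1 := by rw [hab]
  simp only [ee_apply0, ee_apply1] at h0 h1
  have := AB_sub n a
  have := AB_sub n b
  omega

lemma uu_homog : uu.IsHomogeneous 1 :=
  (isHomogeneous_X _ 0).add ((isHomogeneous_X _ 1).C_mul Complex.I)

lemma vv_homog : vv.IsHomogeneous 1 :=
  (isHomogeneous_X _ 0).sub ((isHomogeneous_X _ 1).C_mul Complex.I)

lemma sig_homog {p : MvPolynomial (Fin 2) ℂ} {n : ℕ} (hp : p.IsHomogeneous n) :
    (sig p).IsHomogeneous n := by
  have h := hp.aeval ![uu, vv]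
    (fun i => by fin_cases i
                 · exact uu_homog
                 · exact vv_homog)
  rwa [one_mul] at h

lemma tau_homog {p : MvPolynomial (Fin 2) ℂ} {n : ℕ} (hp : p.IsHomogeneous n) :
    (tau p).IsHomogeneous n := by
  have h := hp.aeval (![C (1/2 : ℂ) * (X 0 + X 1), C (-(Complex.I)/2) * (X 0 - X 1)] :
      Fin 2 → MvPolynomial (Fin 2) ℂ)
    (fun i => by fin_cases i
                 · exact ((isHomogeneous_X _ 0).add (isHomogeneous_X _ 1)).C_mul _
                 · exact ((isHomogeneous_X _ 0).sub (isHomogeneous_X _ 1)).C_mul _)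
  rw [one_mul] at h
  simp only [tau]
  exact h

lemma map_sig_homog (n : ℕ) :
    Submodule.map sig.toLinearMap (homogeneousSubmodule (Fin 2) ℂ n) =
      homogeneousSubmodule (Fin 2) ℂ n := by
  apply le_antisymm
  · rintro p ⟨q, hq, rfl⟩
    exact sig_homog hq
  · intro p hp
    exact ⟨tau p, tau_homog hp, by simpa using AlgHom.congr_fun sig_tau p⟩

lemma degree_two (d : Fin 2 →₀ ℕ) : d.degree = d 0 + d 1 := by
  classical
  have h : d.degree = ∑ i : Fin 2, d i := by
    rw [Finsupp.degree]
    exact Finset.sum_subset (Finset.subset_univ _)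
      (fun i _ hi => Finsupp.notMem_support_iff.mp hi)
  rw [h, Fin.sum_univ_two]

lemma ee_degree (n : ℕ) (m : ℤ) (hm1 : m.natAbs ≤ n) (hm2 : Even (n - m.natAbs)) :
    (ee n m).degree = n := by
  rw [degree_two, ee_apply0, ee_apply1]
  exact AB_add n m hm1 hm2

lemma ee_surj (n : ℕ) (d : Fin 2 →₀ ℕ) (hd : d 0 + d 1 = n) :
    ∃ m : ℤ, m.natAbs ≤ n ∧ Even (n - m.natAbs) ∧ ee n m = d := by
  refine ⟨(d 0 : ℤ) - (d 1 : ℤ), by omega, ?_, ?_⟩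
  · rw [Nat.even_iff]
    omega
  · ext i
    fin_cases i
    · show ee n _ 0 = d 0
      rw [ee_apply0]
      simp only [AA]
      split_ifs with h <;> omega
    · show ee n _ 1 = d 1
      rw [ee_apply1]
      simp only [BB]
      split_ifs with h <;> omega

/-- For even `n`, the polynomials `y_{±n}, r²y_{±(n−2)}, …, r^n y_0` are linearly independent
and span the space of degree-`n` homogeneous polynomials. -/
theorem fam_basis (n : ℕ) (hn : Even n) :
    LinearIndependent ℂ
      (fun m : {m : ℤ // m.natAbs ≤ n ∧ Even (n - m.natAbs)} => fam n m.1) ∧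
    Submodule.span ℂ
      (Set.range fun m : {m : ℤ // m.natAbs ≤ n ∧ Even (n - m.natAbs)} => fam n m.1) =
      MvPolynomial.homogeneousSubmodule (Fin 2) ℂ n := by
  set I := {m : ℤ // m.natAbs ≤ n ∧ Even (n - m.natAbs)}
  set monF : I → MvPolynomial (Fin 2) ℂ := fun m => monomial (ee n m.1) (1:ℂ) with hmonF
  have hfun : (fun m : I => fam n m.1) = ⇑sig ∘ monF :=
    funext fun m => (sig_monomial n m.1).symm
  have li_mon : LinearIndependent ℂ monF := by
    have hb := (basisMonomials (Fin 2) ℂ).linearIndependent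
    rw [coe_basisMonomials] at hb
    exact hb.comp (fun m : I => ee n m.1) fun a b h => Subtype.ext (ee_inj n h)
  have span_mon : Submodule.span ℂ (Set.range monF) = homogeneousSubmodule (Fin 2) ℂ n := by
    apply le_antisymm
    · rw [Submodule.span_le]
      rintro _ ⟨m, rfl⟩
      exact isHomogeneous_monomial _ (ee_degree n m.1 m.2.1 m.2.2)
    · intro p hp
      rw [← support_sum_monomial_coeff p]
      apply Submodule.sum_mem
      intro d hd
      have hdeg : d.degree = n := by
        by_contra h
        exact mem_support_iff.mp hd (hp.coeff_eq_zero h)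
      rw [degree_two] at hdeg
      obtain ⟨m, hm1, hm2, hme⟩ := ee_surj n d hdeg
      have : monomial d (coeff d p) = (coeff d p) • monomial d (1:ℂ) := by
        rw [smul_monomial, smul_eq_mul, mul_one]
      rw [this]
      exact Submodule.smul_mem _ _
        (Submodule.subset_span ⟨⟨m, hm1, hm2⟩, by simp only [hmonF, hme]⟩)
  constructor
  · rw [hfun]
    exact li_mon.map' sig.toLinearMap (LinearMap.ker_eq_bot.mpr sig_inj)
  · have h1 : (Set.range fun m : I => fam n m.1) = ⇑sig.toLinearMap '' Set.range monF := by
      rw [hfun, Set.range_comp]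
      rfl
    rw [h1, Submodule.span_image, span_mon, map_sig_homog]
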